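/- arXiv:2407.07584 — 4 statements merged into one kernel-verified Lean document; each statement's English description precedes it below -/
import Mathlib

section
/- Let R be a transitive (equivalence) relation on the state space of an LMC that only relates equally labeled states. Then R is an ε-APB (|P(s)(A) − P(t)(A)| ≤ ε for all (s,t) ∈ R and all R-closed A) if and only if R is an ε-bisimulation (P(s)(A) ≤ P(t)(R(A)) + ε for all (s,t) ∈ R and all A ⊆ S). -/
open scoped BigOperators

attribute [local instance] Classical.propDecidable

/-- Mass that a (sub)distribution `μ` assigns to a set `A`. -/
noncomputable def pmass {S : Type*} (μ : S → ℝ) (A : Set S) : ℝ := ∑' a : A, μ a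

/-- L1-distance between two functions `S → ℝ`. -/
noncomputable def l1dist {S : Type*} (μ ν : S → ℝ) : ℝ := ∑' s, |μ s - ν s|

/-- `μ : S → ℝ` is a probability distribution. -/
def IsDistr {S : Type*} (μ : S → ℝ) : Prop :=
  (∀ s, 0 ≤ μ s) ∧ (∀ s, μ s ≤ 1) ∧ HasSum μ 1

/-- Image of a set under a relation. -/
def relImg {S : Type*} (R : S → S → Prop) (A : Set S) : Set S := {t | ∃ s ∈ A, R s t}

/-- ε-bisimulation on a labeled Markov chain with transition function `P` and labeling `lab`. -/
def IsEpsBisim {S L : Type*} (P : S → S → ℝ) (lab : S → L) (ε : ℝ)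
    (R : S → S → Prop) : Prop :=
  Reflexive R ∧ Symmetric R ∧
    ∀ s t, R s t → lab s = lab t ∧
      ∀ A : Set S, pmass (P s) A ≤ pmass (P t) (relImg R A) + ε

/-- ε-APB (approximate probabilistic bisimulation with precision ε). -/
def IsEpsAPB {S L : Type*} (P : S → S → ℝ) (lab : S → L) (ε : ℝ)
    (R : S → S → Prop) : Prop :=
  Reflexive R ∧ Symmetric R ∧
    ∀ s t, R s t → lab s = lab t ∧
      ∀ A : Set S, relImg R A ⊆ A → |pmass (P s) A - pmass (P t) A| ≤ ε

/-- Weight of a finite path witnessing `B U A` starting at `s` and continuing along the list. -/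
noncomputable def untilWeight {S : Type*} (P : S → S → ℝ) (B A : Set S) :
    S → List S → ℝ
  | s, [] => if s ∈ A then 1 else 0
  | s, t :: rest =>
      if s ∈ A then 0 else if s ∈ B then P s t * untilWeight P B A t rest else 0

/-- `Pr_s(B U A)`: probability of reaching `A` from `s` via states in `B`. -/
noncomputable def untilProb {S : Type*} (P : S → S → ℝ) (B A : Set S) (s : S) : ℝ :=
  ∑' l : List S, untilWeight P B A s l

/-- `Pr_s(□C)`: probability of staying in `C` forever, `= 1 - Pr_s(C U Cᶜ)`. -/
noncomputable def boxProb {S : Type*} (P : S → S → ℝ) (C : Set S) (s : S) : ℝ :=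
  1 - untilProb P C Cᶜ s

/-- Weak ε-bisimulation. -/
def IsWeakEpsBisim {S L : Type*} (P : S → S → ℝ) (lab : S → L) (ε : ℝ)
    (R : S → S → Prop) : Prop :=
  Reflexive R ∧ Symmetric R ∧
    ∀ s t, R s t → lab s = lab t ∧
      ∀ A : Set S, untilProb P {u | lab u = lab s} A s ≤
        untilProb P {u | lab u = lab t} (relImg R A) t + ε

/-- Weak ε-bisimilarity of two states. -/
def WeakEpsBisimilar {S L : Type*} (P : S → S → ℝ) (lab : S → L) (ε : ℝ)
    (s t : S) : Prop :=
  ∃ R, IsWeakEpsBisim P lab ε R ∧ R s t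

/-- Up-to-(n,ε)-bisimilarity. -/
def upTo {S L : Type*} (P : S → S → ℝ) (lab : S → L) (ε : ℝ) :
    ℕ → S → S → Prop
  | 0, _, _ => True
  | n + 1, s, t => lab s = lab t ∧
      ∀ A : Set S,
        pmass (P s) A ≤ pmass (P t) (relImg (upTo P lab ε n) A) + ε ∧
        pmass (P t) A ≤ pmass (P s) (relImg (upTo P lab ε n) A) + ε

/-- Branching ε-bisimulation. -/
def IsBranchingEpsBisim {S L : Type*} (P : S → S → ℝ) (lab : S → L) (ε : ℝ)
    (R : S → S → Prop) : Prop :=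
  Equivalence R ∧
    ∀ s t, R s t → lab s = lab t ∧
      ∀ A : Set S, relImg R A ⊆ A →
        |untilProb P {u | R s u} A s - untilProb P {u | R t u} A t| ≤ ε

/-- Transitive ε-bisimulation (equivalently, an ε-APB which is an equivalence). -/
def IsTransEpsBisim {S L : Type*} (P : S → S → ℝ) (lab : S → L) (ε : ℝ)
    (R : S → S → Prop) : Prop :=
  Equivalence R ∧
    ∀ s t, R s t → lab s = lab t ∧
      ∀ A : Set S, relImg R A ⊆ A → |pmass (P s) A - pmass (P t) A| ≤ ε

/-- Exact probabilistic bisimulation. -/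
def IsExactBisim {S L : Type*} (P : S → S → ℝ) (lab : S → L)
    (R : S → S → Prop) : Prop :=
  Equivalence R ∧
    ∀ s t, R s t → lab s = lab t ∧
      ∀ c, pmass (P s) {u | R c u} = pmass (P t) {u | R c u}

/-- `Pr_s(◇^{≤k} G)`: probability of reaching `G` from `s` within `k` steps. -/
noncomputable def reachLe {S : Type*} (P : S → S → ℝ) (G : Set S) :
    ℕ → S → ℝ
  | 0, s => if s ∈ G then 1 else 0
  | k + 1, s => if s ∈ G then 1 else ∑' t, P s t * reachLe P G k t


/-!
For a transitive reflexive `R`, the image `R(A)` of any set is `R`-closed and contains `A`, so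
the ε-APB bound on `R(A)` yields the ε-bisimulation bound on `A` by monotonicity of the mass.
Conversely, for reflexive `R` an `R`-closed set satisfies `R(A) = A`, and the ε-bisimulation
inequality applied in both directions of `(s,t)` gives `|P(s)(A) − P(t)(A)| ≤ ε`.
-/

lemma pmass_mono {S : Type*} {μ : S → ℝ} (hμ : ∀ s, 0 ≤ μ s) (hsum : Summable μ)
    {A B : Set S} (hAB : A ⊆ B) : pmass μ A ≤ pmass μ B := by
  unfold pmass
  rw [tsum_subtype, tsum_subtype]
  exact (hsum.indicator _).tsum_le_tsum
    (fun s => Set.indicator_le_indicator_of_subset hAB hμ s) (hsum.indicator _)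

section relImg

variable {S : Type*} {R : S → S → Prop}

lemma subset_relImg (hR : ∀ a, R a a) (A : Set S) : A ⊆ relImg R A :=
  fun a ha => ⟨a, ha, hR a⟩

lemma relImg_relImg_subset (hR : ∀ ⦃a b c⦄, R a b → R b c → R a c) (A : Set S) :
    relImg R (relImg R A) ⊆ relImg R A := by
  rintro u ⟨v, ⟨w, hwA, hwv⟩, hvu⟩
  exact ⟨w, hwA, hR hwv hvu⟩

lemma relImg_eq_self (hR : ∀ a, R a a) {A : Set S} (hA : relImg R A ⊆ A) : relImg R A = A :=
  hA.antisymm (subset_relImg hR A)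

end relImg

section

variable {S L : Type*} {P : S → S → ℝ} {lab : S → L} {ε : ℝ} {R : S → S → Prop}

lemma IsEpsAPB.isEpsBisim (h : IsEpsAPB P lab ε R) (hnn : ∀ s u, 0 ≤ P s u)
    (hsum : ∀ s, Summable (P s)) (htrans : ∀ ⦃a b c⦄, R a b → R b c → R a c) :
    IsEpsBisim P lab ε R := by
  obtain ⟨hrefl, hsymm, h⟩ := h
  refine ⟨hrefl, hsymm, fun s t hst => ⟨(h s t hst).1, fun A => ?_⟩⟩
  have hbound := abs_le.mp ((h s t hst).2 (relImg R A) (relImg_relImg_subset htrans A))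
  have hmono := pmass_mono (hnn s) (hsum s) (subset_relImg hrefl A)
  linarith [hbound.2]

lemma IsEpsBisim.isEpsAPB (h : IsEpsBisim P lab ε R) : IsEpsAPB P lab ε R := by
  obtain ⟨hrefl, hsymm, h⟩ := h
  refine ⟨hrefl, hsymm, fun s t hst => ⟨(h s t hst).1, fun A hA => abs_le.mpr ⟨?_, ?_⟩⟩⟩
  · linarith [relImg_eq_self hrefl hA ▸ (h t s (hsymm hst)).2 A]
  · linarith [relImg_eq_self hrefl hA ▸ (h s t hst).2 A]

end

theorem transitive_epsAPB_iff_epsBisim_general {S L : Type*}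
    (P : S → S → ℝ) (lab : S → L)
    (hP : ∀ s, IsDistr (P s)) (ε : ℝ)
    (R : S → S → Prop) (hR : Equivalence R) :
    IsEpsAPB P lab ε R ↔ IsEpsBisim P lab ε R :=
  ⟨fun h => h.isEpsBisim (fun s => (hP s).1) (fun s => (hP s).2.2.summable)
    fun _ _ _ => hR.trans, IsEpsBisim.isEpsAPB⟩

theorem transitive_epsAPB_iff_epsBisim {S L : Type*} [Countable S] [Nonempty S]
    (P : S → S → ℝ) (lab : S → L)
    (hP : ∀ s, IsDistr (P s)) (ε : ℝ)
    (R : S → S → Prop) (hR : Equivalence R)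
    (hlab : ∀ s t, R s t → lab s = lab t) :
    IsEpsAPB P lab ε R ↔ IsEpsBisim P lab ε R :=
  transitive_epsAPB_iff_epsBisim_general P lab hP ε R hR
end

section
/- Let R be a reflexive symmetric relation on a finitely branching LMC relating only equally labeled states such that for all (s,t) ∈ R there is a map Δ : Succ(s) → Distr(Succ(t)) with (1) P(t)(t') = Σ_{s'∈Succ(s)} P(s)(s')·Δ(s')(t') for all t' ∈ Succ(t), and (2) Σ_{s'∈Succ(s)} P(s)(s')·Δ(s')(R(s')∩Succ(t)) ≥ 1 − ε. Then R is an ε-bisimulation, i.e., P(s)(A) ≤ P(t)(R(A)) + ε for all (s,t) ∈ R and all A ⊆ S. -/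
open scoped BigOperators

attribute [local instance] Classical.propDecidable

/-!
Let `g s' := Δ(s')(R(s') ∩ Succ(t))`. Split `P(s)(A)` into `Σ_{s'∈A} P(s)(s') g(s')` and
`Σ_{s'∈A} P(s)(s') (1 - g(s'))`. As `g ≤ 1`, the second sum is at most
`1 - Σ_{s'} P(s)(s') g(s') ≤ ε` by (2). The first sum moves mass along `Δ` only to successors of
`t` related to some state of `A`, so after exchanging the order of summation it is bounded by
`P(t)(R(A))` using (1).
-/

section WeightFunction

variable {S : Type*} {μ ν : S → ℝ} {Δ : S → S → ℝ}

theorem pmass_eq_tsum_indicator (μ : S → ℝ) (A : Set S) :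
    pmass μ A = ∑' s, A.indicator μ s :=
  tsum_subtype A μ

theorem pmass_nonneg (hμ0 : ∀ s, 0 ≤ μ s) (A : Set S) : 0 ≤ pmass μ A :=
  tsum_nonneg fun _ => hμ0 _

theorem pmass_le_of_hasSum {a : ℝ} (hμ0 : ∀ s, 0 ≤ μ s) (hμ : HasSum μ a) (A : Set S) :
    pmass μ A ≤ a :=
  hμ.tsum_eq ▸ Summable.tsum_subtype_le μ A hμ0 hμ.summable

theorem pmass_le_tsum_indicator_mul_add {a : ℝ} {g : S → ℝ} (hμ0 : ∀ s, 0 ≤ μ s)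
    (hμ : HasSum μ a) (hg : ∀ s, μ s ≠ 0 → g s ∈ Set.Icc 0 1) (A : Set S) :
    pmass μ A ≤ ∑' s, A.indicator (fun s => μ s * g s) s + (a - ∑' s, μ s * g s) := by
  have hbounds : ∀ s, 0 ≤ μ s * g s ∧ μ s * g s ≤ μ s := by
    intro s
    by_cases h : μ s = 0
    · simp [h]
    · obtain ⟨hg0, hg1⟩ := hg s h
      exact ⟨mul_nonneg (hμ0 s) hg0, mul_le_of_le_one_right (hμ0 s) hg1⟩
  have hμg : Summable fun s => μ s * g s :=
    .of_nonneg_of_le (fun s => (hbounds s).1) (fun s => (hbounds s).2) hμ.summable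
  have hpoint : ∀ s, A.indicator μ s ≤ A.indicator (fun s => μ s * g s) s + (μ s - μ s * g s) := by
    intro s
    by_cases hs : s ∈ A
    · simp [hs]
    · simpa [hs] using (hbounds s).2
  rw [pmass_eq_tsum_indicator, ← hμ.tsum_eq, ← hμ.summable.tsum_sub hμg,
    ← (hμg.indicator A).tsum_add (hμ.summable.sub hμg)]
  exact Summable.tsum_le_tsum hpoint (hμ.summable.indicator A)
    ((hμg.indicator A).add (hμ.summable.sub hμg))

theorem summable_mul_kernel (hμ0 : ∀ s, 0 ≤ μ s) (hμ : Summable μ) (hΔ0 : ∀ s t, 0 ≤ Δ s t)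
    (hΔ1 : ∀ s, μ s ≠ 0 → HasSum (Δ s) 1) :
    Summable fun p : S × S => μ p.1 * Δ p.1 p.2 := by
  refine (summable_prod_of_nonneg fun p => mul_nonneg (hμ0 _) (hΔ0 _ _)).2 ⟨fun s => ?_, ?_⟩
  · by_cases h : μ s = 0
    · simp [h]
    · simpa using (hΔ1 s h).summable.mul_left (μ s)
  · refine hμ.congr fun s => ?_
    by_cases h : μ s = 0
    · simp [h]
    · simp [tsum_mul_left, (hΔ1 s h).tsum_eq]

theorem tsum_indicator_mul_pmass_le (hμ0 : ∀ s, 0 ≤ μ s) (hμ : Summable μ)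
    (hν : Summable ν) (hΔ0 : ∀ s t, 0 ≤ Δ s t)
    (hΔ1 : ∀ s, μ s ≠ 0 → HasSum (Δ s) 1) (hνΔ : ∀ t, ν t ≠ 0 → ν t = ∑' s, μ s * Δ s t)
    {A B : Set S} {G : S → Set S} (hG : ∀ s ∈ A, ∀ t ∈ G s, t ∈ B ∧ ν t ≠ 0) :
    ∑' s, A.indicator (fun s => μ s * pmass (Δ s) (G s)) s ≤ pmass ν B := by
  set f : S → S → ℝ := fun s t => A.indicator (fun s => μ s * (G s).indicator (Δ s) t) s
  have hk := summable_mul_kernel hμ0 hμ hΔ0 hΔ1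
  have hf0 : ∀ s t, 0 ≤ f s t := fun s t => Set.indicator_nonneg
    (fun s _ => mul_nonneg (hμ0 s) (Set.indicator_nonneg (fun t _ => hΔ0 s t) t)) s
  have hfk : ∀ s t, f s t ≤ μ s * Δ s t := by
    intro s t
    by_cases hs : s ∈ A
    · simpa [f, hs] using
        mul_le_mul_of_nonneg_left (Set.indicator_le_self' (fun t _ => hΔ0 s t) t) (hμ0 s)
    · simpa [f, hs] using mul_nonneg (hμ0 s) (hΔ0 s t)
  have hf : Summable (Function.uncurry f) :=
    hk.of_nonneg_of_le (fun p => hf0 p.1 p.2) (fun p => hfk p.1 p.2)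
  have hrow : ∀ s, A.indicator (fun s => μ s * pmass (Δ s) (G s)) s = ∑' t, f s t := by
    intro s
    by_cases hs : s ∈ A
    · simp [f, hs, pmass_eq_tsum_indicator, tsum_mul_left]
    · simp [f, hs]
  have hcol : ∀ t, ∑' s, f s t ≤ B.indicator ν t := by
    intro t
    by_cases ht : t ∈ B ∧ ν t ≠ 0
    · rw [Set.indicator_of_mem ht.1, hνΔ t ht.2]
      exact Summable.tsum_le_tsum (hfk · t) (by simpa using hf.prod_symm.prod_factor t)
        (by simpa using hk.prod_symm.prod_factor t)
    · have hzero : ∀ s, f s t = 0 := by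
        intro s
        by_cases hs : s ∈ A
        · have htG : t ∉ G s := fun h => ht (hG s hs t h)
          simp [f, hs, htG]
        · simp [f, hs]
      rw [tsum_congr hzero, tsum_zero]
      exact (Set.indicator_apply_eq_zero.2 fun htB => not_not.1 fun h => ht ⟨htB, h⟩).symm.le
  calc ∑' s, A.indicator (fun s => μ s * pmass (Δ s) (G s)) s = ∑' s, ∑' t, f s t :=
        tsum_congr hrow
    _ = ∑' t, ∑' s, f s t := hf.tsum_comm.symm
    _ ≤ ∑' t, B.indicator ν t :=
        Summable.tsum_le_tsum hcol (by simpa using hf.prod_symm.prod) (hν.indicator B)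
    _ = pmass ν B := (pmass_eq_tsum_indicator ν B).symm

end WeightFunction

theorem epsBisim_of_weightFunction_general {S L : Type*}
    (P : S → S → ℝ) (lab : S → L)
    (hP : ∀ s, IsDistr (P s))
    (ε : ℝ) (R : S → S → Prop)
    (hrefl : Reflexive R) (hsym : Symmetric R)
    (hlab : ∀ s t, R s t → lab s = lab t)
    (hΔ : ∀ s t, R s t → ∃ Δ : S → S → ℝ,
      (∀ s' t', 0 ≤ Δ s' t') ∧
      (∀ s', P s s' ≠ 0 → HasSum (fun t' => Δ s' t') 1) ∧
      (∀ s' t', P s s' ≠ 0 → Δ s' t' ≠ 0 → P t t' ≠ 0) ∧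
      (∀ t', P t t' ≠ 0 → P t t' = ∑' s', P s s' * Δ s' t') ∧
      1 - ε ≤ ∑' s', P s s' * pmass (Δ s') {t' | R s' t' ∧ P t t' ≠ 0}) :
    IsEpsBisim P lab ε R := by
  refine ⟨hrefl, hsym, fun s t hst => ⟨hlab s t hst, fun A => ?_⟩⟩
  obtain ⟨Δ, hΔ0, hΔ1, -, hcoupling, hmatched⟩ := hΔ s t hst
  obtain ⟨hμ0, -, hμ⟩ := hP s
  obtain ⟨-, -, hν⟩ := hP t
  set G : S → Set S := fun s' => {t' | R s' t' ∧ P t t' ≠ 0}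
  have hG : ∀ s' ∈ A, ∀ t' ∈ G s', t' ∈ relImg R A ∧ P t t' ≠ 0 :=
    fun s' hs' t' ht' => ⟨⟨s', hs', ht'.1⟩, ht'.2⟩
  have hg : ∀ s', P s s' ≠ 0 → pmass (Δ s') (G s') ∈ Set.Icc 0 1 := fun s' hs' =>
    ⟨pmass_nonneg (hΔ0 s') _, pmass_le_of_hasSum (hΔ0 s') (hΔ1 s' hs') _⟩
  calc pmass (P s) A
      ≤ ∑' s', A.indicator (fun s' => P s s' * pmass (Δ s') (G s')) s' +
          (1 - ∑' s', P s s' * pmass (Δ s') (G s')) :=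
        pmass_le_tsum_indicator_mul_add hμ0 hμ hg A
    _ ≤ pmass (P t) (relImg R A) + ε := by
        gcongr
        · exact tsum_indicator_mul_pmass_le hμ0 hμ.summable hν.summable hΔ0 hΔ1 hcoupling hG
        · linarith

theorem epsBisim_of_weightFunction {S L : Type*} [Countable S] [Nonempty S]
    (P : S → S → ℝ) (lab : S → L)
    (hP : ∀ s, IsDistr (P s)) (hfb : ∀ s, (Function.support (P s)).Finite)
    (ε : ℝ) (R : S → S → Prop)
    (hrefl : Reflexive R) (hsym : Symmetric R)
    (hlab : ∀ s t, R s t → lab s = lab t)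
    (hΔ : ∀ s t, R s t → ∃ Δ : S → S → ℝ,
      (∀ s' t', 0 ≤ Δ s' t') ∧
      (∀ s', P s s' ≠ 0 → HasSum (fun t' => Δ s' t') 1) ∧
      (∀ s' t', P s s' ≠ 0 → Δ s' t' ≠ 0 → P t t' ≠ 0) ∧
      (∀ t', P t t' ≠ 0 → P t t' = ∑' s', P s s' * Δ s' t') ∧
      1 - ε ≤ ∑' s', P s s' * pmass (Δ s') {t' | R s' t' ∧ P t t' ≠ 0}) :
    IsEpsBisim P lab ε R :=
  epsBisim_of_weightFunction_general P lab hP ε R hrefl hsym hlab hΔ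
end

section
/- Let M be a finite LMC with states S, and let R be an equivalence on S relating only equally labeled states and such that for each equivalence class A ∈ S/R there is a distribution P*_A on S/R with |P(s)(C) − P*_A(C)| ≤ ε/2 for all s ∈ A and all R-closed sets C. Then there exists an ε-perturbation M' of M (i.e., ‖P(s) − P'(s)‖₁ ≤ ε for all s) on which R is an exact probabilistic bisimulation. -/
open scoped BigOperators

attribute [local instance] Classical.propDecidable

/-!
Fix a state `s` with centroid `ν` of its class. Rescaling `P(s)` inside every `R`-class `C` so
that it carries mass `ν(C)` (or replacing it there by `ν` when `P(s)(C) = 0`) makes `R` an exact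
bisimulation and costs `∑_C |P(s)(C) - ν(C)|` in `L¹`. Splitting the classes according to the sign
of `P(s)(C) - ν(C)`, this sum is the difference of `P(s)` and `ν` on one `R`-closed set plus the
difference of `ν` and `P(s)` on another, hence at most `ε/2 + ε/2`.
-/

open Finset

lemma IsDistr.sum_eq_one {S : Type*} [Fintype S] {μ : S → ℝ} (hμ : IsDistr μ) :
    ∑ s, μ s = 1 :=
  (hasSum_fintype μ).unique hμ.2.2

lemma isDistr_of_nonneg_of_sum_eq_one {S : Type*} [Fintype S] {μ : S → ℝ}
    (h₀ : ∀ s, 0 ≤ μ s) (h₁ : ∑ s, μ s = 1) : IsDistr μ := by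
  refine ⟨h₀, fun s => ?_, h₁ ▸ hasSum_fintype μ⟩
  calc μ s ≤ ∑ t, μ t := single_le_sum (fun t _ => h₀ t) (mem_univ s)
    _ = 1 := h₁

lemma pmass_eq_sum_filter {S : Type*} [Fintype S] (μ : S → ℝ) (A : Set S) :
    pmass μ A = ∑ t with t ∈ A, μ t := by
  rw [pmass, _root_.tsum_subtype, tsum_fintype, sum_filter]
  rfl

lemma relImg_preimage_subset {S β : Type*} {R : S → S → Prop} {f : S → β}
    (hf : ∀ s t, R s t → f s = f t) (B : Set β) : relImg R (f ⁻¹' B) ⊆ f ⁻¹' B := by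
  rintro t ⟨s, hs, hst⟩
  rwa [Set.mem_preimage, ← hf s t hst]

lemma sum_abs_le_two_mul_of_forall_abs_sum_le {β : Type*} [Fintype β] (d : β → ℝ) {δ : ℝ}
    (h : ∀ B : Finset β, |∑ b ∈ B, d b| ≤ δ) : ∑ b, |d b| ≤ 2 * δ := by
  have hpos := (abs_le.1 (h {b | 0 ≤ d b})).2
  have hneg := (abs_le.1 (h {b | ¬0 ≤ d b})).1
  calc ∑ b, |d b| = ∑ b with 0 ≤ d b, d b - ∑ b with ¬0 ≤ d b, d b := by
        rw [← sum_filter_add_sum_filter_not univ (fun b => 0 ≤ d b), sub_eq_add_neg,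
          ← sum_neg_distrib]
        congr 1 <;> refine sum_congr rfl fun b hb => ?_ <;> have hb := (mem_filter.1 hb).2
        · exact abs_of_nonneg hb
        · exact abs_of_neg (not_le.1 hb)
    _ ≤ 2 * δ := by linarith

section Rescale

variable {S β : Type*} [Fintype S] (f : S → β)

noncomputable def fiberMass (μ : S → ℝ) (b : β) : ℝ := ∑ t with f t = b, μ t

noncomputable def rescale (μ ν : S → ℝ) (t : S) : ℝ :=
  if fiberMass f μ (f t) = 0 then ν t
  else μ t * (fiberMass f ν (f t) / fiberMass f μ (f t))

variable {f}

lemma sum_eq_sum_fiberMass [Fintype β] (μ : S → ℝ) : ∑ t, μ t = ∑ b, fiberMass f μ b :=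
  (sum_fiberwise univ f μ).symm

lemma sum_fiberMass_eq_pmass_preimage (μ : S → ℝ) (B : Finset β) :
    ∑ b ∈ B, fiberMass f μ b = pmass μ (f ⁻¹' B) := by
  rw [pmass_eq_sum_filter]
  convert sum_fiberwise_eq_sum_filter univ B f μ using 2
  · exact sum_congr (filter_congr_decidable ..) fun _ _ => rfl
  · simp

lemma rescale_of_fiberMass_eq_zero {μ ν : S → ℝ} {t : S} (h : fiberMass f μ (f t) = 0) :
    rescale f μ ν t = ν t :=
  if_pos h

lemma rescale_of_fiberMass_ne_zero {μ ν : S → ℝ} {t : S} (h : fiberMass f μ (f t) ≠ 0) :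
    rescale f μ ν t = μ t * (fiberMass f ν (f t) / fiberMass f μ (f t)) :=
  if_neg h

lemma rescale_nonneg {μ ν : S → ℝ} (hμ : ∀ t, 0 ≤ μ t) (hν : ∀ t, 0 ≤ ν t) (t : S) :
    0 ≤ rescale f μ ν t := by
  unfold rescale
  split_ifs
  · exact hν t
  · exact mul_nonneg (hμ t) (div_nonneg (sum_nonneg fun u _ => hν u) (sum_nonneg fun u _ => hμ u))

lemma fiberMass_rescale (μ ν : S → ℝ) (b : β) :
    fiberMass f (rescale f μ ν) b = fiberMass f ν b := by
  by_cases h : fiberMass f μ b = 0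
  · refine sum_congr rfl fun t ht => rescale_of_fiberMass_eq_zero ?_
    rwa [(mem_filter.1 ht).2]
  · calc fiberMass f (rescale f μ ν) b
        = ∑ t with f t = b, μ t * (fiberMass f ν b / fiberMass f μ b) :=
          sum_congr rfl fun t ht => by
            rw [← (mem_filter.1 ht).2] at h ⊢
            exact rescale_of_fiberMass_ne_zero h
      _ = fiberMass f ν b := by rw [← sum_mul, ← fiberMass, mul_div_cancel₀ _ h]

lemma sum_rescale [Fintype β] (μ ν : S → ℝ) : ∑ t, rescale f μ ν t = ∑ t, ν t := by
  simp only [sum_eq_sum_fiberMass (f := f), fiberMass_rescale]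

lemma sum_fiber_abs_sub_rescale {μ ν : S → ℝ} (hμ : ∀ t, 0 ≤ μ t) (hν : ∀ t, 0 ≤ ν t) (b : β) :
    ∑ t with f t = b, |μ t - rescale f μ ν t| = |fiberMass f μ b - fiberMass f ν b| := by
  by_cases h : fiberMass f μ b = 0
  · have hzero : ∀ t ∈ univ.filter (f · = b), μ t = 0 :=
      (sum_eq_zero_iff_of_nonneg fun t _ => hμ t).1 h
    calc ∑ t with f t = b, |μ t - rescale f μ ν t| = ∑ t with f t = b, ν t :=
          sum_congr rfl fun t ht => by
            rw [hzero t ht, zero_sub, abs_neg, abs_of_nonneg (rescale_nonneg hμ hν t),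
              rescale_of_fiberMass_eq_zero (by rwa [(mem_filter.1 ht).2])]
      _ = |fiberMass f μ b - fiberMass f ν b| := by
          rw [h, zero_sub, abs_neg, fiberMass, abs_of_nonneg (sum_nonneg fun t _ => hν t)]
  · have hpos : 0 < fiberMass f μ b := (sum_nonneg fun t _ => hμ t).lt_of_ne' h
    calc ∑ t with f t = b, |μ t - rescale f μ ν t|
        = ∑ t with f t = b, μ t * (|fiberMass f μ b - fiberMass f ν b| / fiberMass f μ b) :=
          sum_congr rfl fun t ht => by
            rw [← (mem_filter.1 ht).2] at h hpos ⊢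
            rw [rescale_of_fiberMass_ne_zero h, ← mul_one_sub, one_sub_div h, abs_mul,
              abs_of_nonneg (hμ t), abs_div, abs_of_pos hpos]
      _ = |fiberMass f μ b - fiberMass f ν b| := by
          rw [← sum_mul, ← fiberMass, mul_div_cancel₀ _ h]

lemma sum_abs_sub_rescale [Fintype β] {μ ν : S → ℝ} (hμ : ∀ t, 0 ≤ μ t) (hν : ∀ t, 0 ≤ ν t) :
    ∑ t, |μ t - rescale f μ ν t| = ∑ b, |fiberMass f μ b - fiberMass f ν b| := by
  rw [← sum_fiberwise univ f]
  exact sum_congr rfl fun b _ => sum_fiber_abs_sub_rescale hμ hν b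

end Rescale

lemma pmass_eq_fiberMass_mk {S : Type*} [Fintype S] (r : Setoid S) (μ : S → ℝ) (c : S) :
    pmass μ {u | r c u} = fiberMass (Quotient.mk r) μ ⟦c⟧ := by
  rw [pmass_eq_sum_filter, fiberMass]
  congr 1
  ext u
  simp only [mem_filter, mem_univ, true_and]
  exact ⟨fun h => (Quotient.sound h).symm, fun h => Quotient.exact h.symm⟩

theorem perturbation_of_centroid_general {S L : Type*} [Fintype S]
    (P : S → S → ℝ) (lab : S → L)
    (hP : ∀ s, IsDistr (P s)) (ε : ℝ)
    (R : S → S → Prop) (hR : Equivalence R)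
    (hlab : ∀ s t, R s t → lab s = lab t)
    (hcentroid : ∀ a : S, ∃ μ : S → ℝ, IsDistr μ ∧
      ∀ s, R a s → ∀ C : Set S, relImg R C ⊆ C →
        |pmass (P s) C - pmass μ C| ≤ ε / 2) :
    ∃ P' : S → S → ℝ, (∀ s, IsDistr (P' s)) ∧
      (∀ s, l1dist (P s) (P' s) ≤ ε) ∧ IsExactBisim P' lab R := by
  choose μ hμ hμP using hcentroid
  let r : Setoid S := ⟨R, hR⟩
  let ν : S → S → ℝ := fun s => μ (⟦s⟧ : Quotient r).out
  have hν : ∀ s, IsDistr (ν s) := fun s => hμ _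
  let P' : S → S → ℝ := fun s => rescale (Quotient.mk r) (P s) (ν s)
  refine ⟨P', fun s => ?_, fun s => ?_, hR, fun s t hst => ⟨hlab s t hst, fun c => ?_⟩⟩
  · exact isDistr_of_nonneg_of_sum_eq_one (rescale_nonneg (hP s).1 (hν s).1)
      (by rw [sum_rescale, (hν s).sum_eq_one])
  · rw [l1dist, tsum_fintype, sum_abs_sub_rescale (hP s).1 (hν s).1,
      ← mul_div_cancel₀ ε two_ne_zero]
    refine sum_abs_le_two_mul_of_forall_abs_sum_le _ fun B => ?_
    rw [sum_sub_distrib, sum_fiberMass_eq_pmass_preimage, sum_fiberMass_eq_pmass_preimage]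
    exact hμP _ s (Quotient.mk_out s) _ (relImg_preimage_subset (fun _ _ => Quotient.sound) _)
  · have hνst : ν s = ν t := by simp only [ν, Quotient.sound (s := r) hst]
    change pmass (P' s) {u | r c u} = pmass (P' t) {u | r c u}
    simp only [P', pmass_eq_fiberMass_mk, fiberMass_rescale, hνst]

theorem perturbation_of_centroid {S L : Type*} [Fintype S] [Nonempty S]
    (P : S → S → ℝ) (lab : S → L)
    (hP : ∀ s, IsDistr (P s)) (ε : ℝ)
    (R : S → S → Prop) (hR : Equivalence R)
    (hlab : ∀ s t, R s t → lab s = lab t)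
    (hcentroid : ∀ a : S, ∃ μ : S → ℝ, IsDistr μ ∧
      ∀ s, R a s → ∀ C : Set S, relImg R C ⊆ C →
        |pmass (P s) C - pmass μ C| ≤ ε / 2) :
    ∃ P' : S → S → ℝ, (∀ s, IsDistr (P' s)) ∧
      (∀ s, l1dist (P s) (P' s) ≤ ε) ∧ IsExactBisim P' lab R :=
  perturbation_of_centroid_general P lab hP ε R hR hlab hcentroid
end

section
/- Let R be a branching ε-bisimulation on a finite LMC M, and let R^b be the finest equivalence on the transformed LMC M_R containing R and relating s with s_C for all divergent classes C ∈ div_R and s ∈ C. Then R^b is a transitive ε-bisimulation on M_R. Conversely, if R^b is a transitive ε-bisimulation on M_R, then R is a branching ε-bisimulation on M. -/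
open scoped BigOperators

attribute [local instance] Classical.propDecidable

/-- A divergent class: every state of the class of `s` stays inside the class
with probability at least `1 - ε`. -/
def divClass {S : Type*} (P : S → S → ℝ) (ε : ℝ) (sd : Setoid S) (s : S) : Prop :=
  ∀ u, sd.r s u → 1 - ε ≤ boxProb P {v | sd.r s v} u

/-- Transition function of the transformed LMC `M_R`: probability mass that would
diverge inside a divergent class is redirected to a fresh divergence state. -/
noncomputable def MRtrans {S : Type*} (P : S → S → ℝ) (ε : ℝ) (sd : Setoid S) :
    S ⊕ Quotient sd → S ⊕ Quotient sd → ℝ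
  | Sum.inl s, Sum.inl t =>
      if sd.r s t then 0 else untilProb P {v | sd.r s v} {t} s
  | Sum.inl s, Sum.inr q =>
      if q = Quotient.mk sd s ∧ divClass P ε sd s then
        boxProb P {v | sd.r s v} s else 0
  | Sum.inr _, Sum.inl _ => 0
  | Sum.inr q, Sum.inr q' => if q = q' then 1 else 0

/-- Labeling of the transformed LMC `M_R`. -/
noncomputable def MRlab {S L : Type*} (lab : S → L) (sd : Setoid S) :
    S ⊕ Quotient sd → L
  | Sum.inl s => lab s
  | Sum.inr q => lab q.out

/-- The finest equivalence `R^b` on `M_R` containing `R` and relating each state of a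
divergent class with its divergence state. -/
def Rb {S : Type*} (P : S → S → ℝ) (ε : ℝ) (sd : Setoid S) :
    S ⊕ Quotient sd → S ⊕ Quotient sd → Prop
  | Sum.inl s, Sum.inl t => sd.r s t
  | Sum.inl s, Sum.inr q => q = Quotient.mk sd s ∧ divClass P ε sd s
  | Sum.inr q, Sum.inl t => q = Quotient.mk sd t ∧ divClass P ε sd t
  | Sum.inr q, Sum.inr q' => q = q'

/-!
For an `R^b`-closed set `A` of `M_R` and a state `s` with class `C`, let `X` be the set of
states outside `C` lying in `A`; it is `R`-closed. The mass `A` receives from `s` in `M_R` is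
`Pr_s(C U X)`, plus `Pr_s(□C)` if `s_C ∈ A`, and in that case
`Pr_s(C U X) + Pr_s(□C) = 1 - Pr_s(C U (Cᶜ \ X))` with `Cᶜ \ X` again `R`-closed. So for
related `s, t ∈ S` the difference of masses is a difference of branching until-probabilities
into an `R`-closed set, and for `s` and `s_C` it is at most `ε` because `Pr_s(□C) ≥ 1 - ε`.
Conversely, an `R`-closed set `A ⊆ S` with `s ∉ A` lifts to the `R^b`-closed set of all states
of `M_R` whose class meets `A`, which receives exactly `Pr_s(C U A)` from `s`.
-/

open Finset

section Until

variable {S : Type*} (P : S → S → ℝ) (B A : Set S)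

lemma untilWeight_nonneg (hP : ∀ s t, 0 ≤ P s t) :
    ∀ (l : List S) (s : S), 0 ≤ untilWeight P B A s l
  | [], s => by simp only [untilWeight]; split_ifs <;> norm_num
  | t :: l, s => by
      simp only [untilWeight]
      split_ifs
      exacts [le_rfl, mul_nonneg (hP s t) (untilWeight_nonneg hP l t), le_rfl]

lemma untilWeight_empty : ∀ (l : List S) (s : S), untilWeight P B ∅ s l = 0
  | [], _ => by simp [untilWeight]
  | _ :: l, _ => by simp [untilWeight, untilWeight_empty l]

lemma untilWeight_union {A₁ A₂ : Set S} (hA : Disjoint A₁ A₂) (h₁ : Disjoint A₁ B)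
    (h₂ : Disjoint A₂ B) : ∀ (l : List S) (s : S),
      untilWeight P B (A₁ ∪ A₂) s l = untilWeight P B A₁ s l + untilWeight P B A₂ s l
  | [], s => by
      by_cases hs₁ : s ∈ A₁
      · simp [untilWeight, hs₁, Set.disjoint_left.1 hA hs₁]
      · simp [untilWeight, hs₁]
  | t :: l, s => by
      by_cases hs₁ : s ∈ A₁
      · simp [untilWeight, hs₁, Set.disjoint_left.1 hA hs₁, Set.disjoint_left.1 h₁ hs₁]
      by_cases hs₂ : s ∈ A₂
      · simp [untilWeight, hs₂, Set.disjoint_left.1 h₂ hs₂]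
      simp only [untilWeight, Set.mem_union, hs₁, hs₂, or_self, if_false,
        untilWeight_union hA h₁ h₂ l t]
      split_ifs <;> ring

lemma untilProb_of_mem {s : S} (hs : s ∈ A) : untilProb P B A s = 1 := by
  rw [untilProb, tsum_eq_single []]
  · simp [untilWeight, hs]
  · rintro (_ | ⟨t, l⟩) hl
    exacts [absurd rfl hl, by simp [untilWeight, hs]]

lemma untilProb_nonneg (hP : ∀ s, IsDistr (P s)) (s : S) : 0 ≤ untilProb P B A s :=
  tsum_nonneg fun l => untilWeight_nonneg P B A (fun s => (hP s).1) l s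

noncomputable def listsLengthLe [Fintype S] : ℕ → Finset (List S)
  | 0 => {[]}
  | n + 1 => insert [] ((univ ×ˢ listsLengthLe n).image fun p => p.1 :: p.2)

lemma mem_listsLengthLe [Fintype S] :
    ∀ {n : ℕ} {l : List S}, l.length ≤ n → l ∈ listsLengthLe n
  | 0, [], _ => by simp [listsLengthLe]
  | 0, _ :: _, h => by simp at h
  | _ + 1, [], _ => by simp [listsLengthLe]
  | _ + 1, _ :: _, h => by
      simpa [listsLengthLe] using mem_listsLengthLe (Nat.le_of_succ_le_succ h)

variable [Fintype S]

lemma sum_untilWeight_listsLengthLe_le_one (hP : ∀ s, IsDistr (P s)) :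
    ∀ (n : ℕ) (s : S), ∑ l ∈ listsLengthLe n, untilWeight P B A s l ≤ 1
  | 0, s => by simp only [listsLengthLe, sum_singleton, untilWeight]; split_ifs <;> norm_num
  | n + 1, s => by
      rw [listsLengthLe, sum_insert (by simp),
        sum_image fun _ _ _ _ h => Prod.ext_iff.2 (List.cons_eq_cons.1 h), sum_product]
      by_cases hA : s ∈ A
      · simp [untilWeight, hA]
      by_cases hB : s ∈ B
      · simp only [untilWeight, hA, hB, if_false, if_true, zero_add, ← mul_sum]
        calc ∑ t, P s t * ∑ l ∈ listsLengthLe n, untilWeight P B A t l ≤ ∑ t, P s t :=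
              sum_le_sum fun t _ => mul_le_of_le_one_right ((hP s).1 t)
                (sum_untilWeight_listsLengthLe_le_one hP n t)
          _ = 1 := (hasSum_fintype _).unique (hP s).2.2
      · simp [untilWeight, hA, hB]

lemma summable_untilWeight (hP : ∀ s, IsDistr (P s)) (s : S) :
    Summable (untilWeight P B A s) :=
  summable_of_sum_le (fun l => untilWeight_nonneg P B A (fun s => (hP s).1) l s) fun _ =>
    (sum_le_sum_of_subset_of_nonneg (fun _ hl => mem_listsLengthLe (le_sup (f := List.length) hl))
      fun l _ _ => untilWeight_nonneg P B A (fun s => (hP s).1) l s).trans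
      (sum_untilWeight_listsLengthLe_le_one P B A hP _ s)

lemma untilProb_union (hP : ∀ s, IsDistr (P s)) {A₁ A₂ : Set S} (hA : Disjoint A₁ A₂)
    (h₁ : Disjoint A₁ B) (h₂ : Disjoint A₂ B) (s : S) :
    untilProb P B (A₁ ∪ A₂) s = untilProb P B A₁ s + untilProb P B A₂ s := by
  simp only [untilProb, untilWeight_union P B hA h₁ h₂]
  exact (summable_untilWeight P B A₁ hP s).tsum_add (summable_untilWeight P B A₂ hP s)

lemma untilProb_coe_finset (hP : ∀ s, IsDistr (P s)) (T : Finset S) (hT : Disjoint (T : Set S) B)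
    (s : S) : untilProb P B T s = ∑ t ∈ T, untilProb P B {t} s := by
  induction T using Finset.induction_on with
  | empty => simp [untilProb, untilWeight_empty]
  | insert a T ha ih =>
    rw [coe_insert] at hT
    rw [coe_insert, Set.insert_eq, untilProb_union P B hP (by simpa using ha)
      (hT.mono_left (by simp)) (hT.mono_left (by simp)), sum_insert ha,
      ih (hT.mono_left (by simp))]

lemma untilProb_add_boxProb (hP : ∀ s, IsDistr (P s)) {C X : Set S} (hX : X ⊆ Cᶜ) (s : S) :
    untilProb P C X s + boxProb P C s = 1 - untilProb P C (Cᶜ \ X) s := by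
  have hsplit := untilProb_union P C hP Set.disjoint_sdiff_right
    (Set.subset_compl_iff_disjoint_right.1 hX) (disjoint_compl_left.mono_left Set.sdiff_subset) s
  rw [Set.union_sdiff_cancel hX] at hsplit
  rw [boxProb, hsplit]
  ring

end Until

section MR

variable {S : Type*} (P : S → S → ℝ) (ε : ℝ) (sd : Setoid S)

lemma setOf_r_eq_of_r {s t : S} (h : sd.r s t) : {v | sd.r s v} = {v | sd.r t v} :=
  Set.ext fun _ => ⟨sd.trans (sd.symm h), sd.trans h⟩

lemma divClass_congr {s t : S} (h : sd.r s t) : divClass P ε sd s ↔ divClass P ε sd t := by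
  unfold divClass
  rw [setOf_r_eq_of_r sd h]
  exact forall_congr' fun _ => imp_congr_left ⟨sd.trans (sd.symm h), sd.trans h⟩

lemma Rb_equivalence : Equivalence (Rb P ε sd) where
  refl x := by
    cases x with
    | inl s => exact sd.refl s
    | inr q => exact rfl
  symm {x y} h := by
    cases x <;> cases y <;> simp only [Rb] at h ⊢
    exacts [sd.symm h, h, h, h.symm]
  trans {x y z} h₁ h₂ := by
    cases x <;> cases y <;> cases z <;> simp only [Rb] at h₁ h₂ ⊢
    · exact sd.trans h₁ h₂
    · exact ⟨h₂.1.trans (Quotient.sound h₁).symm, (divClass_congr P ε sd h₁).2 h₂.2⟩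
    · exact Quotient.exact (h₁.1.symm.trans h₂.1)
    · exact ⟨h₂ ▸ h₁.1, h₁.2⟩
    · exact ⟨h₁.1.trans (Quotient.sound h₂), (divClass_congr P ε sd h₂).1 h₁.2⟩
    · exact h₁.1.trans h₂.1.symm
    · exact ⟨h₁.trans h₂.1, h₂.2⟩
    · exact h₁.trans h₂

def toClass : S ⊕ Quotient sd → Quotient sd := Sum.elim (Quotient.mk sd) id

lemma toClass_eq_of_Rb {x y : S ⊕ Quotient sd} (h : Rb P ε sd x y) :
    toClass sd x = toClass sd y := by
  cases x <;> cases y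
  exacts [Quotient.sound h, h.1.symm, h.1, h]

lemma MRlab_eq_lab_out {L : Type*} {lab : S → L} (hlab : ∀ s t, sd.r s t → lab s = lab t)
    (x : S ⊕ Quotient sd) : MRlab lab sd x = lab (toClass sd x).out := by
  cases x with
  | inl s => exact hlab _ _ (sd.symm (Quotient.mk_out s))
  | inr q => rfl

lemma pmass_eq_sum_indicator {T : Type*} [Fintype T] (μ : T → ℝ) (A : Set T) :
    pmass μ A = ∑ x, A.indicator μ x :=
  (tsum_subtype A μ).trans (tsum_fintype _)

variable [Fintype S]

lemma pmass_MRtrans_inl (hP : ∀ s, IsDistr (P s)) (s : S) (A : Set (S ⊕ Quotient sd)) :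
    pmass (MRtrans P ε sd (.inl s)) A =
      untilProb P {v | sd.r s v} {t | .inl t ∈ A ∧ ¬ sd.r s t} s +
        if .inr (Quotient.mk sd s) ∈ A ∧ divClass P ε sd s then boxProb P {v | sd.r s v} s
        else 0 := by
  rw [pmass_eq_sum_indicator, Fintype.sum_sum_type,
    ← Set.coe_toFinset {t | .inl t ∈ A ∧ ¬ sd.r s t},
    untilProb_coe_finset P _ hP _ (by simp [Set.disjoint_left]), Set.toFinset_ofPred, sum_filter,
    Fintype.sum_eq_single (Quotient.mk sd s) fun q hq => by simp [Set.indicator, MRtrans, hq]]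
  congr 1
  · refine sum_congr rfl fun t _ => ?_
    by_cases hst : sd.r s t <;> simp [Set.indicator, MRtrans, hst]
  · simp only [Set.indicator, MRtrans, true_and, ite_and]

lemma pmass_MRtrans_inr (q : Quotient sd) (A : Set (S ⊕ Quotient sd)) :
    pmass (MRtrans P ε sd (.inr q)) A = if .inr q ∈ A then 1 else 0 := by
  rw [pmass_eq_sum_indicator, Fintype.sum_sum_type,
    Fintype.sum_eq_single q fun q' hq => by simp [Set.indicator, MRtrans, Ne.symm hq]]
  simp [Set.indicator, MRtrans]

end MR

section Bisim

variable {S : Type*} [Fintype S] (P : S → S → ℝ) (ε : ℝ) (sd : Setoid S)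

lemma abs_pmass_MRtrans_inl_sub_inr_le (hP : ∀ s, IsDistr (P s)) {s : S}
    (hdiv : divClass P ε sd s) (A : Set (S ⊕ Quotient sd)) :
    |pmass (MRtrans P ε sd (.inl s)) A -
      pmass (MRtrans P ε sd (.inr (Quotient.mk sd s))) A| ≤ ε := by
  set C := {v | sd.r s v}
  set X := {t | Sum.inl t ∈ A ∧ ¬ sd.r s t}
  have hsplit := untilProb_add_boxProb P hP (C := C) (X := X) (fun _ h => h.2) s
  have hbox : 1 - ε ≤ boxProb P C s := hdiv s (sd.refl s)
  have hX := untilProb_nonneg P C X hP s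
  have hrest := untilProb_nonneg P C (Cᶜ \ X) hP s
  rw [pmass_MRtrans_inl P ε sd hP, pmass_MRtrans_inr, abs_le]
  by_cases hA : Sum.inr (Quotient.mk sd s) ∈ A
  · rw [if_pos ⟨hA, hdiv⟩, if_pos hA]
    constructor <;> linarith
  · rw [if_neg (fun h => hA h.1), if_neg hA]
    constructor <;> linarith

lemma abs_pmass_MRtrans_inl_sub_inl_le {L : Type*} {lab : S → L} (hP : ∀ s, IsDistr (P s))
    (hbr : IsBranchingEpsBisim P lab ε sd.r) {s t : S} (hst : sd.r s t)
    {A : Set (S ⊕ Quotient sd)} (hA : relImg (Rb P ε sd) A ⊆ A) :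
    |pmass (MRtrans P ε sd (.inl s)) A - pmass (MRtrans P ε sd (.inl t)) A| ≤ ε := by
  set C := {v | sd.r s v}
  set X := {u | Sum.inl u ∈ A ∧ ¬ sd.r s u}
  have hCt : {v | sd.r t v} = C := (setOf_r_eq_of_r sd hst).symm
  have hXt : {u | Sum.inl u ∈ A ∧ ¬ sd.r t u} = X := by
    ext u
    exact and_congr_right' (not_congr ⟨sd.trans hst, sd.trans (sd.symm hst)⟩)
  have hbr' : ∀ B, relImg sd.r B ⊆ B → |untilProb P C B s - untilProb P C B t| ≤ ε := by
    simpa only [hCt] using (hbr.2 s t hst).2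
  have hX : relImg sd.r X ⊆ X := by
    rintro w ⟨u, hu, huw⟩
    exact ⟨hA ⟨.inl u, hu.1, huw⟩, fun h => hu.2 (sd.trans h (sd.symm huw))⟩
  rw [pmass_MRtrans_inl P ε sd hP, pmass_MRtrans_inl P ε sd hP, hCt, hXt,
    ← Quotient.sound hst, ← divClass_congr P ε sd hst]
  split_ifs
  · have hrest : relImg sd.r (Cᶜ \ X) ⊆ Cᶜ \ X := by
      rintro w ⟨u, ⟨hu, huX⟩, huw⟩
      exact ⟨fun h => hu (sd.trans h (sd.symm huw)), fun h => huX (hX ⟨w, h, sd.symm huw⟩)⟩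
    rw [untilProb_add_boxProb P hP (fun _ h => h.2), untilProb_add_boxProb P hP (fun _ h => h.2),
      abs_sub_comm]
    convert hbr' _ hrest using 2
    ring
  · simpa using hbr' X hX

lemma abs_pmass_MRtrans_sub_le_of_Rb {L : Type*} {lab : S → L} (hP : ∀ s, IsDistr (P s))
    (hε : 0 ≤ ε) (hbr : IsBranchingEpsBisim P lab ε sd.r) {x y : S ⊕ Quotient sd}
    (hxy : Rb P ε sd x y) {A : Set (S ⊕ Quotient sd)} (hA : relImg (Rb P ε sd) A ⊆ A) :
    |pmass (MRtrans P ε sd x) A - pmass (MRtrans P ε sd y) A| ≤ ε := by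
  rcases x with s | q <;> rcases y with t | q'
  · exact abs_pmass_MRtrans_inl_sub_inl_le P ε sd hP hbr hxy hA
  · obtain ⟨rfl, hdiv⟩ := hxy
    exact abs_pmass_MRtrans_inl_sub_inr_le P ε sd hP hdiv A
  · obtain ⟨rfl, hdiv⟩ := hxy
    rw [abs_sub_comm]
    exact abs_pmass_MRtrans_inl_sub_inr_le P ε sd hP hdiv A
  · rw [show q = q' from hxy, sub_self, abs_zero]
    exact hε

lemma isTransEpsBisim_Rb {L : Type*} {lab : S → L} (hP : ∀ s, IsDistr (P s)) (hε : 0 ≤ ε)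
    (hbr : IsBranchingEpsBisim P lab ε sd.r) :
    IsTransEpsBisim (MRtrans P ε sd) (MRlab lab sd) ε (Rb P ε sd) := by
  have hlab : ∀ s t, sd.r s t → lab s = lab t := fun s t h => (hbr.2 s t h).1
  refine ⟨Rb_equivalence P ε sd, fun x y hxy => ⟨?_, fun A hA => ?_⟩⟩
  · rw [MRlab_eq_lab_out sd hlab, MRlab_eq_lab_out sd hlab, toClass_eq_of_Rb P ε sd hxy]
  · exact abs_pmass_MRtrans_sub_le_of_Rb P ε sd hP hε hbr hxy hA

lemma abs_untilProb_sub_le_of_isTransEpsBisim {L : Type*} {lab : S ⊕ Quotient sd → L}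
    (hP : ∀ s, IsDistr (P s)) (hε : 0 ≤ ε)
    (htr : IsTransEpsBisim (MRtrans P ε sd) lab ε (Rb P ε sd)) {s t : S} (hst : sd.r s t)
    {A : Set S} (hA : relImg sd.r A ⊆ A) :
    |untilProb P {u | sd.r s u} A s - untilProb P {u | sd.r t u} A t| ≤ ε := by
  by_cases hs : s ∈ A
  · rw [untilProb_of_mem _ _ _ hs, untilProb_of_mem _ _ _ (hA ⟨s, hs, hst⟩), sub_self,
      abs_zero]
    exact hε
  set A' := toClass sd ⁻¹' (Quotient.mk sd '' A)
  have hmem : ∀ u, Sum.inl u ∈ A' ↔ u ∈ A := fun u =>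
    ⟨fun ⟨a, ha, hau⟩ => hA ⟨a, ha, Quotient.exact hau⟩, fun hu => ⟨u, hu, rfl⟩⟩
  have hA' : relImg (Rb P ε sd) A' ⊆ A' := by
    rintro y ⟨x, hx, hxy⟩
    rwa [Set.mem_preimage, ← toClass_eq_of_Rb P ε sd hxy]
  have hX : ∀ r, sd.r s r → {u | Sum.inl u ∈ A' ∧ ¬ sd.r r u} = A := fun r hr =>
    Set.ext fun u => (and_iff_left_of_imp fun hu hru =>
      hs (hA ⟨u, (hmem u).1 hu, sd.symm (sd.trans hr hru)⟩)).trans (hmem u)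
  have hs' : Sum.inr (Quotient.mk sd s) ∉ A' := hs ∘ (hmem s).1
  have key := (htr.2 (.inl s) (.inl t) hst).2 _ hA'
  rwa [pmass_MRtrans_inl P ε sd hP, pmass_MRtrans_inl P ε sd hP, hX s (sd.refl s), hX t hst,
    ← Quotient.sound hst, if_neg fun h => hs' h.1, if_neg fun h => hs' h.1, add_zero, add_zero]
    at key

lemma isBranchingEpsBisim_of_isTransEpsBisim_Rb {L : Type*} {lab : S → L}
    (hP : ∀ s, IsDistr (P s)) (hε : 0 ≤ ε)
    (htr : IsTransEpsBisim (MRtrans P ε sd) (MRlab lab sd) ε (Rb P ε sd)) :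
    IsBranchingEpsBisim P lab ε sd.r :=
  ⟨sd.iseqv, fun s t hst => ⟨(htr.2 (.inl s) (.inl t) hst).1,
    fun _ hA => abs_untilProb_sub_le_of_isTransEpsBisim P ε sd hP hε htr hst hA⟩⟩

end Bisim

theorem branching_iff_trans_on_MR_general {S L : Type*} [Fintype S]
    (P : S → S → ℝ) (lab : S → L)
    (hP : ∀ s, IsDistr (P s)) (ε : ℝ) (hε0 : 0 ≤ ε)
    (sd : Setoid S) :
    IsBranchingEpsBisim P lab ε sd.r ↔
      IsTransEpsBisim (MRtrans P ε sd) (MRlab lab sd) ε (Rb P ε sd) :=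
  ⟨isTransEpsBisim_Rb P ε sd hP hε0,
    isBranchingEpsBisim_of_isTransEpsBisim_Rb P ε sd hP hε0⟩

theorem branching_iff_trans_on_MR {S L : Type*} [Fintype S] [Nonempty S]
    (P : S → S → ℝ) (lab : S → L)
    (hP : ∀ s, IsDistr (P s)) (ε : ℝ) (hε0 : 0 ≤ ε) (hε1 : ε ≤ 1)
    (sd : Setoid S) (hlab : ∀ s t, sd.r s t → lab s = lab t) :
    IsBranchingEpsBisim P lab ε sd.r ↔
      IsTransEpsBisim (MRtrans P ε sd) (MRlab lab sd) ε (Rb P ε sd) :=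
  branching_iff_trans_on_MR_general P lab hP ε hε0 sd
end
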